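/- The Moore–Penrose pseudoinverse of an inverse Kronecker product factors: (A ⊗ⁱ B)⁺ = A⁺ ⊗ⁱ B⁺. -/
import Mathlib


open Matrix Kronecker

/-- Inverse Kronecker product: `A ⊗ⁱ B := B ⊗ A`. -/
def invKron {p q r s : Type*} (A : Matrix p q ℝ) (B : Matrix r s ℝ) :
    Matrix (r × p) (s × q) ℝ := B ⊗ₖ A

/-- `P` satisfies the four Penrose conditions for `A`, i.e. `P = A⁺`
(the Moore–Penrose pseudoinverse is the unique such matrix). -/
def IsMoorePenrose {p q : Type*} [Fintype p] [Fintype q]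
    (A : Matrix p q ℝ) (P : Matrix q p ℝ) : Prop :=
  A * P * A = A ∧ P * A * P = P ∧ (A * P)ᵀ = A * P ∧ (P * A)ᵀ = P * A

/-- `(A ⊗ⁱ B)⁺ = A⁺ ⊗ⁱ B⁺`. -/
theorem invKron_moorePenrose (p q r s : ℕ)
    (A : Matrix (Fin p) (Fin q) ℝ) (Ap : Matrix (Fin q) (Fin p) ℝ)
    (B : Matrix (Fin r) (Fin s) ℝ) (Bp : Matrix (Fin s) (Fin r) ℝ)
    (hA : IsMoorePenrose A Ap) (hB : IsMoorePenrose B Bp) :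
    IsMoorePenrose (invKron A B) (invKron Ap Bp) := by
  obtain ⟨a1, a2, a3, a4⟩ := hA
  obtain ⟨b1, b2, b3, b4⟩ := hB
  unfold invKron
  refine ⟨?_, ?_, ?_, ?_⟩ <;>
    simp only [← Matrix.mul_kronecker_mul, ← Matrix.kroneckerMap_transpose,
      a1, a2, a3, a4, b1, b2, b3, b4]
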